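/- For n ≥ 5, with the notation q_j^(n) and m₁^(n) of the recursive construction for the ideals Iₙ, the polynomial identity (m₁^(n))^{n−2} = −x_{n−2}^{n−3} q₂^{(n−1)} q₁^{(n)} + x_{n−2}^{n−3} q₁^{(n−1)} q₂^{(n)} holds in K[x₁,...,xₙ]. -/

import Mathlib

set_option synthInstance.maxHeartbeats 1000000
set_option maxHeartbeats 1000000

open MvPolynomial Ideal CategoryTheory

noncomputable section

/-- The arithmetical rank of an ideal: the least `r` such that some `r` elements
generate `I` up to radical. -/
noncomputable def ara {R : Type*} [CommRing R] (I : Ideal R) : ℕ :=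
  sInf {r | ∃ a : Fin r → R, Ideal.radical (Ideal.span (Set.range a)) = Ideal.radical I}

/-- The height of an ideal: the infimum of the heights of the primes containing it. -/
noncomputable def idealHeight {R : Type*} [CommRing R] (I : Ideal R) : ℕ∞ :=
  ⨅ (P : PrimeSpectrum R) (_ : I ≤ P.asIdeal), Order.height P

/-- `m_i^{(n)} = (x₁⋯xₙ)/(x_{n-i}x_{n-i+1})`, as a polynomial in `K[x₁, x₂, …]`. -/
def mgen (K : Type*) [Field K] (i n : ℕ) : MvPolynomial ℕ K :=
  ∏ k ∈ Finset.Icc 1 n \ {n - i, n - i + 1}, X k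

/-- The ideal `Iₙ = (m₁^{(n)}, …, m_{n-1}^{(n)})`. -/
def In (K : Type*) [Field K] (n : ℕ) : Ideal (MvPolynomial ℕ K) :=
  Ideal.span {p | ∃ i, 1 ≤ i ∧ i ≤ n - 1 ∧ p = mgen K i n}

/-- The recursively defined first generator `q₁^{(n)}`. -/
def q1 (K : Type*) [Field K] : ℕ → MvPolynomial ℕ K
  | 4 => mgen K 2 4
  | 5 => X 5 * mgen K 2 4 - X 1 * X 2 * mgen K 1 5
  | (n + 6) => X (n + 6) * q1 K (n + 5) - X (n + 3) ^ (n + 2) * q1 K (n + 4) * mgen K 1 (n + 6)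
  | _ => 0

/-- The recursively defined second generator `q₂^{(n)}`. -/
def q2 (K : Type*) [Field K] : ℕ → MvPolynomial ℕ K
  | 4 => mgen K 1 4 + mgen K 3 4
  | 5 => X 5 * (mgen K 1 4 + mgen K 3 4) - X 2 * X 3 * mgen K 1 5
  | (n + 6) => X (n + 6) * q2 K (n + 5) - X (n + 3) ^ (n + 2) * q2 K (n + 4) * mgen K 1 (n + 6)
  | _ => 0

/-
`q₁` and `q₂` satisfy the same three-term recurrence, so their Casoratian
`q₁^{(n)} q₂^{(n+1)} - q₂^{(n)} q₁^{(n+1)}` gets multiplied by `x_{n-2}^{n-3} m₁^{(n+1)}` at each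
step. Since also `m₁^{(n+1)} = x_{n-1} m₁^{(n)}`, the identity for `n` yields the one for `n + 1`,
and the case `n = 5` is a direct computation.
-/

theorem casoratian_of_recurrence {R : Type*} [CommRing R] {a₀ a₁ a₂ b₀ b₁ b₂ x y : R}
    (ha : a₂ = x * a₁ - y * a₀) (hb : b₂ = x * b₁ - y * b₀) :
    a₁ * b₂ - b₁ * a₂ = y * (a₀ * b₁ - b₀ * a₁) := by
  rw [ha, hb]
  ring

section

variable (K : Type*) [Field K]

def qCasoratian (n : ℕ) : MvPolynomial ℕ K :=
  q1 K n * q2 K (n + 1) - q2 K n * q1 K (n + 1)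

theorem qCasoratian_succ (k : ℕ) :
    qCasoratian K (k + 5) = X (k + 3) ^ (k + 2) * mgen K 1 (k + 6) * qCasoratian K (k + 4) :=
  casoratian_of_recurrence (x := X (k + 6)) (by rw [q1]; ring) (by rw [q2]; ring)

theorem mgen_one_eq_prod (n : ℕ) : mgen K 1 n = ∏ j ∈ Finset.Icc 1 (n - 2), X j := by
  unfold mgen
  congr 1
  ext j
  simp only [Finset.mem_sdiff, Finset.mem_Icc, Finset.mem_insert, Finset.mem_singleton]
  omega

theorem mgen_one_succ (n : ℕ) : mgen K 1 (n + 3) = X (n + 1) * mgen K 1 (n + 2) := by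
  rw [mgen_one_eq_prod, mgen_one_eq_prod, show n + 3 - 2 = n + 1 by omega,
    Finset.prod_Icc_succ_top (Nat.le_add_left 1 n), Nat.add_sub_cancel, mul_comm]

theorem mgen_one_pow_eq_qCasoratian (k : ℕ) :
    mgen K 1 (k + 5) ^ (k + 3) = X (k + 3) ^ (k + 2) * qCasoratian K (k + 4) := by
  induction k with
  | zero =>
    have h14 : mgen K 1 4 = X 1 * X 2 := by
      rw [mgen, show Finset.Icc 1 4 \ {3, 4} = ({1, 2} : Finset ℕ) by decide]
      exact Finset.prod_pair (by norm_num)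
    have h24 : mgen K 2 4 = X 1 * X 4 := by
      rw [mgen, show Finset.Icc 1 4 \ {2, 3} = ({1, 4} : Finset ℕ) by decide]
      exact Finset.prod_pair (by norm_num)
    have h34 : mgen K 3 4 = X 3 * X 4 := by
      rw [mgen, show Finset.Icc 1 4 \ {1, 2} = ({3, 4} : Finset ℕ) by decide]
      exact Finset.prod_pair (by norm_num)
    have h15 : mgen K 1 5 = X 1 * X 2 * X 3 := by
      rw [mgen_one_succ K 2, h14]
      ring
    simp only [qCasoratian, q1, q2, h14, h24, h34, h15]
    ring
  | succ k ih =>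
    rw [qCasoratian_succ, mgen_one_succ]
    linear_combination (X (k + 4) : MvPolynomial ℕ K) ^ (k + 4) * mgen K 1 (k + 5) * ih

end

/-- The identity
`(m₁^{(n)})^{n-2} = -x_{n-2}^{n-3} q₂^{(n-1)} q₁^{(n)} + x_{n-2}^{n-3} q₁^{(n-1)} q₂^{(n)}`
for `n ≥ 5`. -/
theorem stmt14 (K : Type*) [Field K] (n : ℕ) (hn : 5 ≤ n) :
    mgen K 1 n ^ (n - 2) =
      -(X (n - 2) ^ (n - 3)) * q2 K (n - 1) * q1 K n +
        X (n - 2) ^ (n - 3) * q1 K (n - 1) * q2 K n := by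
  obtain ⟨k, rfl⟩ : ∃ k, n = k + 5 := ⟨n - 5, by omega⟩
  rw [show k + 5 - 2 = k + 3 by omega, show k + 5 - 3 = k + 2 by omega,
    show k + 5 - 1 = k + 4 by omega, mgen_one_pow_eq_qCasoratian, qCasoratian]
  ring
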